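/- Let R = Q[H, T, B]/(T³, H²T² − 4BT², BH² − BHT + (1/2)BT², BH² − B², H³ + H²T + (1/2)HT² − 4BH), where H, T have degree 1 and B has degree 2. Then R has Q-dimension 14, with linear basis {1, H, T, H², HT, T², B, H²T, HT², BH, BT, BHT, BT², BHT²}. -/

import Mathlib

/-!
Theorem B (algebraic part): the ring
`R = ℚ[H, T, B]/(T³, H²T² − 4BT², BH² − BHT + (1/2)BT², BH² − B², H³ + H²T + (1/2)HT² − 4BH)`
(`H`, `T` of degree 1, `B` of degree 2) has ℚ-dimension 14, with linear basis
`{1, H, T, H², HT, T², B, H²T, HT², BH, BT, BHT, BT², BHT²}`.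
-/

open MvPolynomial

noncomputable section

/-- The polynomial ring `ℚ[H, T, B]` with `H = X 0`, `T = X 1`, `B = X 2`. -/
abbrev P12 : Type := MvPolynomial (Fin 3) ℚ

/-- The ideal
`(T³, H²T² − 4BT², BH² − BHT + (1/2)BT², BH² − B², H³ + H²T + (1/2)HT² − 4BH)`. -/
def I12 : Ideal P12 := Ideal.span
  { (X 1 : P12) ^ 3,
    (X 0 : P12) ^ 2 * (X 1) ^ 2 - 4 * X 2 * (X 1) ^ 2,
    (X 2 : P12) * (X 0) ^ 2 - X 2 * X 0 * X 1 + C (1 / 2 : ℚ) * X 2 * (X 1) ^ 2,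
    (X 2 : P12) * (X 0) ^ 2 - (X 2) ^ 2,
    (X 0 : P12) ^ 3 + (X 0) ^ 2 * X 1 + C (1 / 2 : ℚ) * X 0 * (X 1) ^ 2 - 4 * X 2 * X 0 }

abbrev R12 : Type := P12 ⧸ I12

def H12 : R12 := Ideal.Quotient.mk I12 (X 0)
def T12 : R12 := Ideal.Quotient.mk I12 (X 1)
def B12 : R12 := Ideal.Quotient.mk I12 (X 2)


set_option maxHeartbeats 4000000
set_option synthInstance.maxHeartbeats 1000000
-- Auxiliary: integer multiplication matrices (regular representation, rescaled basis)
def NH : Matrix (Fin 14) (Fin 14) ℤ := !![0, 0, 0, 0, 0, 0, 0, 0, 0, 0, 0, 0, 0, 0;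
    1, 0, 0, 0, 0, 0, 0, 0, 0, 0, 0, 0, 0, 0;
    0, 0, 0, 0, 0, 0, 0, 0, 0, 0, 0, 0, 0, 0;
    0, 1, 0, 0, 0, 0, 0, 0, 0, 0, 0, 0, 0, 0;
    0, 0, 1, 0, 0, 0, 0, 0, 0, 0, 0, 0, 0, 0;
    0, 0, 0, 0, 0, 0, 0, 0, 0, 0, 0, 0, 0, 0;
    0, 0, 0, 0, 0, 0, 0, 0, 0, 0, 0, 0, 0, 0;
    0, 0, 0, -1, 1, 0, 0, 0, 0, 0, 0, 0, 0, 0;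
    0, 0, 0, -1, 0, 2, 0, 0, 0, 0, 0, 0, 0, 0;
    0, 0, 0, 4, 0, 0, 1, 0, 0, 0, 0, 0, 0, 0;
    0, 0, 0, 0, 0, 0, 0, 0, 0, 0, 0, 0, 0, 0;
    0, 0, 0, 0, 0, 0, 0, 4, 0, 1, 1, 0, 0, 0;
    0, 0, 0, 0, 0, 0, 0, -8, 4, -1, 0, 0, 0, 0;
    0, 0, 0, 0, 0, 0, 0, 0, 0, 0, 0, 2, 1, 0]
def NT : Matrix (Fin 14) (Fin 14) ℤ := !![0, 0, 0, 0, 0, 0, 0, 0, 0, 0, 0, 0, 0, 0;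
    0, 0, 0, 0, 0, 0, 0, 0, 0, 0, 0, 0, 0, 0;
    1, 0, 0, 0, 0, 0, 0, 0, 0, 0, 0, 0, 0, 0;
    0, 0, 0, 0, 0, 0, 0, 0, 0, 0, 0, 0, 0, 0;
    0, 1, 0, 0, 0, 0, 0, 0, 0, 0, 0, 0, 0, 0;
    0, 0, 1, 0, 0, 0, 0, 0, 0, 0, 0, 0, 0, 0;
    0, 0, 0, 0, 0, 0, 0, 0, 0, 0, 0, 0, 0, 0;
    0, 0, 0, 1, 0, 0, 0, 0, 0, 0, 0, 0, 0, 0;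
    0, 0, 0, 0, 2, 0, 0, 0, 0, 0, 0, 0, 0, 0;
    0, 0, 0, 0, 0, 0, 0, 0, 0, 0, 0, 0, 0, 0;
    0, 0, 0, 0, 0, 0, 1, 0, 0, 0, 0, 0, 0, 0;
    0, 0, 0, 0, 0, 0, 0, 0, 0, 1, 0, 0, 0, 0;
    0, 0, 0, 0, 0, 0, 0, 8, 0, 0, 2, 0, 0, 0;
    0, 0, 0, 0, 0, 0, 0, 0, 0, 0, 0, 2, 0, 0]
def NB : Matrix (Fin 14) (Fin 14) ℤ := !![0, 0, 0, 0, 0, 0, 0, 0, 0, 0, 0, 0, 0, 0;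
    0, 0, 0, 0, 0, 0, 0, 0, 0, 0, 0, 0, 0, 0;
    0, 0, 0, 0, 0, 0, 0, 0, 0, 0, 0, 0, 0, 0;
    0, 0, 0, 0, 0, 0, 0, 0, 0, 0, 0, 0, 0, 0;
    0, 0, 0, 0, 0, 0, 0, 0, 0, 0, 0, 0, 0, 0;
    0, 0, 0, 0, 0, 0, 0, 0, 0, 0, 0, 0, 0, 0;
    1, 0, 0, 0, 0, 0, 0, 0, 0, 0, 0, 0, 0, 0;
    0, 0, 0, 0, 0, 0, 0, 0, 0, 0, 0, 0, 0, 0;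
    0, 0, 0, 0, 0, 0, 0, 0, 0, 0, 0, 0, 0, 0;
    0, 1, 0, 0, 0, 0, 0, 0, 0, 0, 0, 0, 0, 0;
    0, 0, 1, 0, 0, 0, 0, 0, 0, 0, 0, 0, 0, 0;
    0, 0, 0, 1, 1, 0, 1, 0, 0, 0, 0, 0, 0, 0;
    0, 0, 0, -1, 0, 2, -1, 0, 0, 0, 0, 0, 0, 0;
    0, 0, 0, 0, 0, 0, 0, 2, 1, 1, 2, 0, 0, 0]
def K3 : Matrix (Fin 14) (Fin 14) ℤ := !![0, 0, 0, 0, 0, 0, 0, 0, 0, 0, 0, 0, 0, 0;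
    0, 0, 0, 0, 0, 0, 0, 0, 0, 0, 0, 0, 0, 0;
    0, 0, 0, 0, 0, 0, 0, 0, 0, 0, 0, 0, 0, 0;
    0, 0, 0, 0, 0, 0, 0, 0, 0, 0, 0, 0, 0, 0;
    0, 0, 0, 0, 0, 0, 0, 0, 0, 0, 0, 0, 0, 0;
    0, 0, 0, 0, 0, 0, 0, 0, 0, 0, 0, 0, 0, 0;
    0, 0, 0, 0, 0, 0, 0, 0, 0, 0, 0, 0, 0, 0;
    0, 0, 0, 0, 0, 0, 0, 0, 0, 0, 0, 0, 0, 0;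
    0, 0, 0, 0, 0, 0, 0, 0, 0, 0, 0, 0, 0, 0;
    0, 0, 0, 0, 0, 0, 0, 0, 0, 0, 0, 0, 0, 0;
    0, 0, 0, 0, 0, 0, 0, 0, 0, 0, 0, 0, 0, 0;
    0, 0, 0, 0, 0, 0, 0, 0, 0, 0, 0, 0, 0, 0;
    1, 0, 0, 0, 0, 0, 0, 0, 0, 0, 0, 0, 0, 0;
    0, 1, 0, 0, 0, 0, 0, 0, 0, 0, 0, 0, 0, 0]
def K5 : Matrix (Fin 14) (Fin 14) ℤ := !![0, 0, 0, 0, 0, 0, 0, 0, 0, 0, 0, 0, 0, 0;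
    0, 0, 0, 0, 0, 0, 0, 0, 0, 0, 0, 0, 0, 0;
    0, 0, 0, 0, 0, 0, 0, 0, 0, 0, 0, 0, 0, 0;
    0, 0, 0, 0, 0, 0, 0, 0, 0, 0, 0, 0, 0, 0;
    0, 0, 0, 0, 0, 0, 0, 0, 0, 0, 0, 0, 0, 0;
    0, 0, 0, 0, 0, 0, 0, 0, 0, 0, 0, 0, 0, 0;
    0, 0, 0, 0, 0, 0, 0, 0, 0, 0, 0, 0, 0, 0;
    0, 0, 0, 0, 0, 0, 0, 0, 0, 0, 0, 0, 0, 0;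
    1, 0, 0, 0, 0, 0, 0, 0, 0, 0, 0, 0, 0, 0;
    0, 0, 0, 0, 0, 0, 0, 0, 0, 0, 0, 0, 0, 0;
    0, 0, 0, 0, 0, 0, 0, 0, 0, 0, 0, 0, 0, 0;
    0, 0, 0, 0, 0, 0, 0, 0, 0, 0, 0, 0, 0, 0;
    0, 4, 0, 0, 0, 0, 0, 0, 0, 0, 0, 0, 0, 0;
    0, 0, 0, 4, 0, 0, 1, 0, 0, 0, 0, 0, 0, 0]

def qmapM : Matrix (Fin 14) (Fin 14) ℤ →+* Matrix (Fin 14) (Fin 14) ℚ :=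
  (Int.castRingHom ℚ).mapMatrix

def mH : Matrix (Fin 14) (Fin 14) ℚ := qmapM NH
def mT : Matrix (Fin 14) (Fin 14) ℚ := qmapM NT
def mB : Matrix (Fin 14) (Fin 14) ℚ := qmapM NB

lemma comm_HT : mH * mT = mT * mH := by
  rw [mH, mT, ← map_mul, ← map_mul, (by decide : NH * NT = NT * NH)]
lemma comm_HB : mH * mB = mB * mH := by
  rw [mH, mB, ← map_mul, ← map_mul, (by decide : NH * NB = NB * NH)]
lemma comm_TB : mT * mB = mB * mT := by
  rw [mT, mB, ← map_mul, ← map_mul, (by decide : NT * NB = NB * NT)]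

def S12 : Subalgebra ℚ (Matrix (Fin 14) (Fin 14) ℚ) := Algebra.adjoin ℚ {mH, mT, mB}

noncomputable instance : CommRing S12 :=
  { (inferInstance : Ring S12) with
    mul_comm := (Algebra.adjoinCommRingOfComm ℚ (by
    rintro a (rfl | rfl | rfl) b (rfl | rfl | rfl) <;>
      first
        | rfl
        | exact comm_HT | exact comm_HT.symm
        | exact comm_HB | exact comm_HB.symm
        | exact comm_TB | exact comm_TB.symm)).mul_comm }

def sH : S12 := ⟨mH, Algebra.subset_adjoin (by simp)⟩
def sT : S12 := ⟨mT, Algebra.subset_adjoin (by simp)⟩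
def sB : S12 := ⟨mB, Algebra.subset_adjoin (by simp)⟩

def gS : Fin 3 → S12
  | 0 => sH
  | 1 => sT
  | 2 => sB

def φ12 : P12 →ₐ[ℚ] S12 := aeval gS

lemma half_smul (Mz Kz : Matrix (Fin 14) (Fin 14) ℤ) (h : Mz = (2:ℤ) • Kz) :
    (1/2 : ℚ) • qmapM Mz = qmapM Kz := by
  subst h
  ext i j
  simp only [qmapM, RingHom.mapMatrix_apply, Matrix.map_apply, Matrix.smul_apply,
    smul_eq_mul, map_mul, map_ofNat, Int.coe_castRingHom]
  push_cast
  ring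

lemma sval_eq (x y : Matrix (Fin 14) (Fin 14) ℚ) (hx : x ∈ S12) (hy : y ∈ S12) (h : x = y) :
    (⟨x, hx⟩ : S12) = ⟨y, hy⟩ := Subtype.ext h

lemma hker12 : ∀ p ∈ I12, φ12 p = 0 := by
  have hle : I12 ≤ RingHom.ker (φ12 : P12 →+* S12) := by
    rw [I12, Ideal.span_le]
    intro x hx
    simp only [Set.mem_insert_iff, Set.mem_singleton_iff] at hx
    rw [SetLike.mem_coe, RingHom.mem_ker]
    obtain rfl | rfl | rfl | rfl | rfl := hx
    · -- T^3
      show φ12 ((X 1 : P12)^3) = 0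
      rw [show φ12 ((X 1 : P12)^3) = sT^3 by simp [φ12, gS]]
      apply Subtype.ext
      show mT^3 = 0
      rw [mT, ← map_pow, (by decide : NT^3 = 0), map_zero]
    · -- H^2T^2 - 4BT^2
      show φ12 ((X 0 : P12)^2*(X 1)^2 - 4*X 2*(X 1)^2) = 0
      rw [show φ12 ((X 0 : P12)^2*(X 1)^2 - 4*X 2*(X 1)^2)
            = sH^2*sT^2 - 4*sB*sT^2 by simp [φ12, gS]]
      apply Subtype.ext
      show mH^2*mT^2 - 4*(mB:Matrix (Fin 14) (Fin 14) ℚ)*mT^2 = 0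
      rw [mH, mT, mB, ← map_pow, ← map_pow, ← map_mul, ← map_ofNat qmapM 4,
        ← map_mul, ← map_mul, ← map_sub,
        (by decide : NH^2*NT^2 - 4*NB*NT^2 = 0), map_zero]
    · -- BH^2 - BHT + (1/2)BT^2
      show φ12 ((X 2 : P12)*(X 0)^2 - X 2*X 0*X 1 + C (1/2:ℚ)*X 2*(X 1)^2) = 0
      rw [show φ12 ((X 2 : P12)*(X 0)^2 - X 2*X 0*X 1 + C (1/2:ℚ)*X 2*(X 1)^2)
            = sB*sH^2 - sB*sH*sT + algebraMap ℚ S12 (1/2)*sB*sT^2 by simp [φ12, gS]]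
      apply Subtype.ext
      show mB*mH^2 - mB*mH*mT + algebraMap ℚ _ (1/2)*mB*mT^2 = 0
      rw [Algebra.algebraMap_eq_smul_one, smul_mul_assoc, smul_mul_assoc, one_mul]
      rw [mH, mT, mB, ← map_pow, ← map_pow, ← map_mul, ← map_mul, ← map_mul, ← map_mul,
        half_smul _ K3 (by decide), ← map_sub, ← map_add,
        (by decide : NB*NH^2 - NB*NH*NT + K3 = 0), map_zero]
    · -- BH^2 - B^2
      show φ12 ((X 2 : P12)*(X 0)^2 - (X 2)^2) = 0
      rw [show φ12 ((X 2 : P12)*(X 0)^2 - (X 2)^2) = sB*sH^2 - sB^2 by simp [φ12, gS]]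
      apply Subtype.ext
      show mB*mH^2 - mB^2 = 0
      rw [mH, mB, ← map_pow, ← map_pow, ← map_mul, ← map_sub,
        (by decide : NB*NH^2 - NB^2 = 0), map_zero]
    · -- H^3 + H^2 T + (1/2) H T^2 - 4 B H
      show φ12 ((X 0 : P12)^3 + (X 0)^2*X 1 + C (1/2:ℚ)*X 0*(X 1)^2 - 4*X 2*X 0) = 0
      rw [show φ12 ((X 0 : P12)^3 + (X 0)^2*X 1 + C (1/2:ℚ)*X 0*(X 1)^2 - 4*X 2*X 0)
            = sH^3 + sH^2*sT + algebraMap ℚ S12 (1/2)*sH*sT^2 - 4*sB*sH by simp [φ12, gS]]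
      apply Subtype.ext
      show mH^3 + mH^2*mT + algebraMap ℚ _ (1/2)*mH*mT^2 - 4*(mB:Matrix (Fin 14) (Fin 14) ℚ)*mH = 0
      rw [Algebra.algebraMap_eq_smul_one, smul_mul_assoc, smul_mul_assoc, one_mul]
      rw [mH, mT, mB, ← map_pow, ← map_pow, ← map_pow, ← map_mul, ← map_mul,
        ← map_ofNat qmapM 4, ← map_mul, ← map_mul,
        half_smul _ K5 (by decide), ← map_add, ← map_add, ← map_sub,
        (by decide : NH^3 + NH^2*NT + K5 - 4*NB*NH = 0), map_zero]
  intro p hp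
  exact RingHom.mem_ker.mp (hle hp)

noncomputable def ψ12 : R12 →ₐ[ℚ] S12 := Ideal.Quotient.liftₐ I12 φ12 hker12


def cs : Fin 14 → ℚ := fun j => if j = 8 ∨ j = 12 ∨ j = 13 then 1/2 else 1

noncomputable def ev12 : Matrix (Fin 14) (Fin 14) ℚ →ₗ[ℚ] (Fin 14 → ℚ) where
  toFun M := fun j => cs j * M j 0
  map_add' x y := by funext j; simp [Matrix.add_apply, mul_add]
  map_smul' q x := by funext j; simp [Matrix.smul_apply]; ring

lemma ev_qmap_single (L : Matrix (Fin 14) (Fin 14) ℤ) (i : Fin 14) (c : ℤ)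
    (h : (fun j => L j 0) = Pi.single i c) (hc : cs i * (c : ℚ) = 1) :
    ev12 (qmapM L) = Pi.single i (1 : ℚ) := by
  funext j
  have hj := congrFun h j
  show cs j * (qmapM L) j 0 = _
  have hL : (qmapM L) j 0 = ((L j 0 : ℤ) : ℚ) := by
    simp [qmapM, RingHom.mapMatrix_apply, Matrix.map_apply]
  rcases eq_or_ne j i with rfl | hne
  · rw [hL, hj, Pi.single_eq_same, Pi.single_eq_same, hc]
  · rw [hL, hj, Pi.single_eq_of_ne hne, Pi.single_eq_of_ne hne]
    simp

noncomputable def fR : R12 →ₗ[ℚ] (Fin 14 → ℚ) :=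
  ev12 ∘ₗ (S12.val.toLinearMap ∘ₗ ψ12.toLinearMap)

lemma sHval : (sH : Matrix (Fin 14) (Fin 14) ℚ) = mH := rfl
lemma sTval : (sT : Matrix (Fin 14) (Fin 14) ℚ) = mT := rfl
lemma sBval : (sB : Matrix (Fin 14) (Fin 14) ℚ) = mB := rfl


lemma psiH : ψ12 H12 = sH := by
  show ψ12 (Ideal.Quotient.mk I12 (X 0)) = sH
  rw [show (Ideal.Quotient.mk I12 (X 0) : R12) = Ideal.Quotient.mkₐ ℚ I12 (X 0) from rfl]
  rw [ψ12, ← AlgHom.comp_apply, Ideal.Quotient.liftₐ_comp]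
  simp [φ12, gS]


lemma psiT : ψ12 T12 = sT := by
  show ψ12 (Ideal.Quotient.mk I12 (X 1)) = sT
  rw [show (Ideal.Quotient.mk I12 (X 1) : R12) = Ideal.Quotient.mkₐ ℚ I12 (X 1) from rfl]
  rw [ψ12, ← AlgHom.comp_apply, Ideal.Quotient.liftₐ_comp]
  simp [φ12, gS]


lemma psiB : ψ12 B12 = sB := by
  show ψ12 (Ideal.Quotient.mk I12 (X 2)) = sB
  rw [show (Ideal.Quotient.mk I12 (X 2) : R12) = Ideal.Quotient.mkₐ ℚ I12 (X 2) from rfl]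
  rw [ψ12, ← AlgHom.comp_apply, Ideal.Quotient.liftₐ_comp]
  simp [φ12, gS]


lemma fR_v0 : fR (1 : R12) = Pi.single (0 : Fin 14) (1 : ℚ) := by
  show ev12 ((ψ12 (1:R12) : S12) : Matrix (Fin 14) (Fin 14) ℚ) = _
  rw [map_one, OneMemClass.coe_one, ← map_one qmapM]
  exact ev_qmap_single _ _ 1 (by decide) (by simp only [cs]; rw [if_neg (by decide)]; norm_num)


lemma fR_v1 : fR (H12) = Pi.single (1 : Fin 14) (1 : ℚ) := by
  have hco : ((ψ12 (H12) : S12) : Matrix (Fin 14) (Fin 14) ℚ) = qmapM (NH) := by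
    simp only [map_mul, map_pow, psiH, psiT, psiB]
    simp only [MulMemClass.coe_mul, SubmonoidClass.coe_pow, sHval, sTval, sBval]
    simp only [mH, mT, mB, ← map_mul, ← map_pow]
  show ev12 ((ψ12 (H12) : S12) : Matrix (Fin 14) (Fin 14) ℚ) = _
  rw [hco]
  exact ev_qmap_single _ _ 1 (by decide) (by simp only [cs]; rw [if_neg (by decide)]; norm_num)


lemma fR_v2 : fR (T12) = Pi.single (2 : Fin 14) (1 : ℚ) := by
  have hco : ((ψ12 (T12) : S12) : Matrix (Fin 14) (Fin 14) ℚ) = qmapM (NT) := by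
    simp only [map_mul, map_pow, psiH, psiT, psiB]
    simp only [MulMemClass.coe_mul, SubmonoidClass.coe_pow, sHval, sTval, sBval]
    simp only [mH, mT, mB, ← map_mul, ← map_pow]
  show ev12 ((ψ12 (T12) : S12) : Matrix (Fin 14) (Fin 14) ℚ) = _
  rw [hco]
  exact ev_qmap_single _ _ 1 (by decide) (by simp only [cs]; rw [if_neg (by decide)]; norm_num)


lemma fR_v3 : fR (H12 ^ 2) = Pi.single (3 : Fin 14) (1 : ℚ) := by
  have hco : ((ψ12 (H12 ^ 2) : S12) : Matrix (Fin 14) (Fin 14) ℚ) = qmapM (NH ^ 2) := by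
    simp only [map_mul, map_pow, psiH, psiT, psiB]
    simp only [MulMemClass.coe_mul, SubmonoidClass.coe_pow, sHval, sTval, sBval]
    simp only [mH, mT, mB, ← map_mul, ← map_pow]
  show ev12 ((ψ12 (H12 ^ 2) : S12) : Matrix (Fin 14) (Fin 14) ℚ) = _
  rw [hco]
  exact ev_qmap_single _ _ 1 (by decide) (by simp only [cs]; rw [if_neg (by decide)]; norm_num)


lemma fR_v4 : fR (H12 * T12) = Pi.single (4 : Fin 14) (1 : ℚ) := by
  have hco : ((ψ12 (H12 * T12) : S12) : Matrix (Fin 14) (Fin 14) ℚ) = qmapM (NH * NT) := by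
    simp only [map_mul, map_pow, psiH, psiT, psiB]
    simp only [MulMemClass.coe_mul, SubmonoidClass.coe_pow, sHval, sTval, sBval]
    simp only [mH, mT, mB, ← map_mul, ← map_pow]
  show ev12 ((ψ12 (H12 * T12) : S12) : Matrix (Fin 14) (Fin 14) ℚ) = _
  rw [hco]
  exact ev_qmap_single _ _ 1 (by decide) (by simp only [cs]; rw [if_neg (by decide)]; norm_num)


lemma fR_v5 : fR (T12 ^ 2) = Pi.single (5 : Fin 14) (1 : ℚ) := by
  have hco : ((ψ12 (T12 ^ 2) : S12) : Matrix (Fin 14) (Fin 14) ℚ) = qmapM (NT ^ 2) := by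
    simp only [map_mul, map_pow, psiH, psiT, psiB]
    simp only [MulMemClass.coe_mul, SubmonoidClass.coe_pow, sHval, sTval, sBval]
    simp only [mH, mT, mB, ← map_mul, ← map_pow]
  show ev12 ((ψ12 (T12 ^ 2) : S12) : Matrix (Fin 14) (Fin 14) ℚ) = _
  rw [hco]
  exact ev_qmap_single _ _ 1 (by decide) (by simp only [cs]; rw [if_neg (by decide)]; norm_num)


lemma fR_v6 : fR (B12) = Pi.single (6 : Fin 14) (1 : ℚ) := by
  have hco : ((ψ12 (B12) : S12) : Matrix (Fin 14) (Fin 14) ℚ) = qmapM (NB) := by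
    simp only [map_mul, map_pow, psiH, psiT, psiB]
    simp only [MulMemClass.coe_mul, SubmonoidClass.coe_pow, sHval, sTval, sBval]
    simp only [mH, mT, mB, ← map_mul, ← map_pow]
  show ev12 ((ψ12 (B12) : S12) : Matrix (Fin 14) (Fin 14) ℚ) = _
  rw [hco]
  exact ev_qmap_single _ _ 1 (by decide) (by simp only [cs]; rw [if_neg (by decide)]; norm_num)


lemma fR_v7 : fR (H12 ^ 2 * T12) = Pi.single (7 : Fin 14) (1 : ℚ) := by
  have hco : ((ψ12 (H12 ^ 2 * T12) : S12) : Matrix (Fin 14) (Fin 14) ℚ) = qmapM (NH ^ 2 * NT) := by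
    simp only [map_mul, map_pow, psiH, psiT, psiB]
    simp only [MulMemClass.coe_mul, SubmonoidClass.coe_pow, sHval, sTval, sBval]
    simp only [mH, mT, mB, ← map_mul, ← map_pow]
  show ev12 ((ψ12 (H12 ^ 2 * T12) : S12) : Matrix (Fin 14) (Fin 14) ℚ) = _
  rw [hco]
  exact ev_qmap_single _ _ 1 (by decide) (by simp only [cs]; rw [if_neg (by decide)]; norm_num)


lemma fR_v8 : fR (H12 * T12 ^ 2) = Pi.single (8 : Fin 14) (1 : ℚ) := by
  have hco : ((ψ12 (H12 * T12 ^ 2) : S12) : Matrix (Fin 14) (Fin 14) ℚ) = qmapM (NH * NT ^ 2) := by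
    simp only [map_mul, map_pow, psiH, psiT, psiB]
    simp only [MulMemClass.coe_mul, SubmonoidClass.coe_pow, sHval, sTval, sBval]
    simp only [mH, mT, mB, ← map_mul, ← map_pow]
  show ev12 ((ψ12 (H12 * T12 ^ 2) : S12) : Matrix (Fin 14) (Fin 14) ℚ) = _
  rw [hco]
  exact ev_qmap_single _ _ 2 (by decide) (by simp only [cs]; rw [if_pos (by decide)]; norm_num)


lemma fR_v9 : fR (B12 * H12) = Pi.single (9 : Fin 14) (1 : ℚ) := by
  have hco : ((ψ12 (B12 * H12) : S12) : Matrix (Fin 14) (Fin 14) ℚ) = qmapM (NB * NH) := by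
    simp only [map_mul, map_pow, psiH, psiT, psiB]
    simp only [MulMemClass.coe_mul, SubmonoidClass.coe_pow, sHval, sTval, sBval]
    simp only [mH, mT, mB, ← map_mul, ← map_pow]
  show ev12 ((ψ12 (B12 * H12) : S12) : Matrix (Fin 14) (Fin 14) ℚ) = _
  rw [hco]
  exact ev_qmap_single _ _ 1 (by decide) (by simp only [cs]; rw [if_neg (by decide)]; norm_num)


lemma fR_v10 : fR (B12 * T12) = Pi.single (10 : Fin 14) (1 : ℚ) := by
  have hco : ((ψ12 (B12 * T12) : S12) : Matrix (Fin 14) (Fin 14) ℚ) = qmapM (NB * NT) := by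
    simp only [map_mul, map_pow, psiH, psiT, psiB]
    simp only [MulMemClass.coe_mul, SubmonoidClass.coe_pow, sHval, sTval, sBval]
    simp only [mH, mT, mB, ← map_mul, ← map_pow]
  show ev12 ((ψ12 (B12 * T12) : S12) : Matrix (Fin 14) (Fin 14) ℚ) = _
  rw [hco]
  exact ev_qmap_single _ _ 1 (by decide) (by simp only [cs]; rw [if_neg (by decide)]; norm_num)


lemma fR_v11 : fR (B12 * H12 * T12) = Pi.single (11 : Fin 14) (1 : ℚ) := by
  have hco : ((ψ12 (B12 * H12 * T12) : S12) : Matrix (Fin 14) (Fin 14) ℚ) = qmapM (NB * NH * NT) := by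
    simp only [map_mul, map_pow, psiH, psiT, psiB]
    simp only [MulMemClass.coe_mul, SubmonoidClass.coe_pow, sHval, sTval, sBval]
    simp only [mH, mT, mB, ← map_mul, ← map_pow]
  show ev12 ((ψ12 (B12 * H12 * T12) : S12) : Matrix (Fin 14) (Fin 14) ℚ) = _
  rw [hco]
  exact ev_qmap_single _ _ 1 (by decide) (by simp only [cs]; rw [if_neg (by decide)]; norm_num)


lemma fR_v12 : fR (B12 * T12 ^ 2) = Pi.single (12 : Fin 14) (1 : ℚ) := by
  have hco : ((ψ12 (B12 * T12 ^ 2) : S12) : Matrix (Fin 14) (Fin 14) ℚ) = qmapM (NB * NT ^ 2) := by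
    simp only [map_mul, map_pow, psiH, psiT, psiB]
    simp only [MulMemClass.coe_mul, SubmonoidClass.coe_pow, sHval, sTval, sBval]
    simp only [mH, mT, mB, ← map_mul, ← map_pow]
  show ev12 ((ψ12 (B12 * T12 ^ 2) : S12) : Matrix (Fin 14) (Fin 14) ℚ) = _
  rw [hco]
  exact ev_qmap_single _ _ 2 (by decide) (by simp only [cs]; rw [if_pos (by decide)]; norm_num)


lemma fR_v13 : fR (B12 * H12 * T12 ^ 2) = Pi.single (13 : Fin 14) (1 : ℚ) := by
  have hco : ((ψ12 (B12 * H12 * T12 ^ 2) : S12) : Matrix (Fin 14) (Fin 14) ℚ) = qmapM (NB * NH * NT ^ 2) := by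
    simp only [map_mul, map_pow, psiH, psiT, psiB]
    simp only [MulMemClass.coe_mul, SubmonoidClass.coe_pow, sHval, sTval, sBval]
    simp only [mH, mT, mB, ← map_mul, ← map_pow]
  show ev12 ((ψ12 (B12 * H12 * T12 ^ 2) : S12) : Matrix (Fin 14) (Fin 14) ℚ) = _
  rw [hco]
  exact ev_qmap_single _ _ 2 (by decide) (by simp only [cs]; rw [if_pos (by decide)]; norm_num)


def vv : Fin 14 → R12 :=
  ![1, H12, T12, H12 ^ 2, H12 * T12, T12 ^ 2, B12,
    H12 ^ 2 * T12, H12 * T12 ^ 2, B12 * H12, B12 * T12,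
    B12 * H12 * T12, B12 * T12 ^ 2, B12 * H12 * T12 ^ 2]

lemma hcomp12 : fR ∘ vv = fun i => Pi.single i (1 : ℚ) := by
  funext i
  fin_cases i
  exacts [fR_v0, fR_v1, fR_v2, fR_v3, fR_v4, fR_v5, fR_v6, fR_v7, fR_v8, fR_v9,
    fR_v10, fR_v11, fR_v12, fR_v13]

lemma hli12 : LinearIndependent ℚ vv := by
  apply LinearIndependent.of_comp fR
  have hb := (Pi.basisFun ℚ (Fin 14)).linearIndependent
  have : ⇑(Pi.basisFun ℚ (Fin 14)) = fun i => Pi.single i (1:ℚ) := by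
    funext i; exact Pi.basisFun_apply ℚ (Fin 14) i
  rw [hcomp12]
  rwa [this] at hb


def ah : R12 := Ideal.Quotient.mk I12 (C (1/2 : ℚ))

noncomputable def sp : Submodule ℚ R12 := Submodule.span ℚ (Set.range vv)

lemma mem_0 : (1 : R12) ∈ sp := Submodule.subset_span ⟨(0 : Fin 14), rfl⟩
lemma mem_1 : H12 ∈ sp := Submodule.subset_span ⟨(1 : Fin 14), rfl⟩
lemma mem_2 : T12 ∈ sp := Submodule.subset_span ⟨(2 : Fin 14), rfl⟩
lemma mem_3 : H12 ^ 2 ∈ sp := Submodule.subset_span ⟨(3 : Fin 14), rfl⟩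
lemma mem_4 : H12 * T12 ∈ sp := Submodule.subset_span ⟨(4 : Fin 14), rfl⟩
lemma mem_5 : T12 ^ 2 ∈ sp := Submodule.subset_span ⟨(5 : Fin 14), rfl⟩
lemma mem_6 : B12 ∈ sp := Submodule.subset_span ⟨(6 : Fin 14), rfl⟩
lemma mem_7 : H12 ^ 2 * T12 ∈ sp := Submodule.subset_span ⟨(7 : Fin 14), rfl⟩
lemma mem_8 : H12 * T12 ^ 2 ∈ sp := Submodule.subset_span ⟨(8 : Fin 14), rfl⟩
lemma mem_9 : B12 * H12 ∈ sp := Submodule.subset_span ⟨(9 : Fin 14), rfl⟩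
lemma mem_10 : B12 * T12 ∈ sp := Submodule.subset_span ⟨(10 : Fin 14), rfl⟩
lemma mem_11 : B12 * H12 * T12 ∈ sp := Submodule.subset_span ⟨(11 : Fin 14), rfl⟩
lemma mem_12 : B12 * T12 ^ 2 ∈ sp := Submodule.subset_span ⟨(12 : Fin 14), rfl⟩
lemma mem_13 : B12 * H12 * T12 ^ 2 ∈ sp := Submodule.subset_span ⟨(13 : Fin 14), rfl⟩

lemma qsmul (q : ℚ) (y : R12) : q • y = algebraMap ℚ R12 q * y := Algebra.smul_def q y

lemma mem4 (x : R12) (h : x ∈ sp) : 4 * x ∈ sp := by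
  have h4 : (4:ℚ) • x = 4 * x := by rw [qsmul, map_ofNat]
  rw [← h4]; exact Submodule.smul_mem _ _ h

lemma memah (x : R12) (h : x ∈ sp) : ah * x ∈ sp := by
  have hh : (1/2:ℚ) • x = ah * x := by rw [qsmul]; rfl
  rw [← hh]; exact Submodule.smul_mem _ _ h

lemma r1 : T12 ^ 3 - 0 = 0 := by
  have h : Ideal.Quotient.mk I12 ((X 1 : P12) ^ 3) = 0 :=
    Ideal.Quotient.eq_zero_iff_mem.mpr (Ideal.subset_span (by simp [Set.mem_insert_iff]))
  rw [map_pow] at h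
  rw [sub_zero]
  exact h

lemma r2 : H12 ^ 2 * T12 ^ 2 - 4 * B12 * T12 ^ 2 = 0 := by
  have h : Ideal.Quotient.mk I12 ((X 0 : P12) ^ 2 * (X 1) ^ 2 - 4 * X 2 * (X 1) ^ 2) = 0 :=
    Ideal.Quotient.eq_zero_iff_mem.mpr (Ideal.subset_span (by simp [Set.mem_insert_iff]))
  simp only [map_sub, map_mul, map_pow, map_ofNat] at h
  exact h

lemma r3 : B12 * H12 ^ 2 - B12 * H12 * T12 + ah * B12 * T12 ^ 2 = 0 := by
  have h : Ideal.Quotient.mk I12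
      ((X 2 : P12) * (X 0) ^ 2 - X 2 * X 0 * X 1 + C (1/2 : ℚ) * X 2 * (X 1) ^ 2) = 0 :=
    Ideal.Quotient.eq_zero_iff_mem.mpr (Ideal.subset_span (by simp [Set.mem_insert_iff]))
  simp only [map_add, map_sub, map_mul, map_pow] at h
  exact h

lemma r4 : B12 * H12 ^ 2 - B12 ^ 2 = 0 := by
  have h : Ideal.Quotient.mk I12 ((X 2 : P12) * (X 0) ^ 2 - (X 2) ^ 2) = 0 :=
    Ideal.Quotient.eq_zero_iff_mem.mpr (Ideal.subset_span (by simp [Set.mem_insert_iff]))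
  simp only [map_sub, map_mul, map_pow] at h
  exact h

lemma r5 : H12 ^ 3 + H12 ^ 2 * T12 + ah * H12 * T12 ^ 2 - 4 * B12 * H12 = 0 := by
  have h : Ideal.Quotient.mk I12
      ((X 0 : P12) ^ 3 + (X 0) ^ 2 * X 1 + C (1/2 : ℚ) * X 0 * (X 1) ^ 2 - 4 * X 2 * X 0) = 0 :=
    Ideal.Quotient.eq_zero_iff_mem.mpr (Ideal.subset_span (by simp [Set.mem_insert_iff]))
  simp only [map_add, map_sub, map_mul, map_pow, map_ofNat] at h
  exact h

lemma h2 : ah + ah = 1 := by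
  show Ideal.Quotient.mk I12 (C (1/2:ℚ)) + Ideal.Quotient.mk I12 (C (1/2:ℚ)) = 1
  rw [← map_add, ← C_add]
  norm_num

lemma p_h_0 : H12 * ((1 : R12)) = (H12) := by ring
lemma p_h_1 : H12 * (H12) = (H12 ^ 2) := by ring
lemma p_h_2 : H12 * (T12) = (H12 * T12) := by ring
lemma p_h_3 : H12 * (H12 ^ 2) = -(H12 ^ 2 * T12) - ah * (H12 * T12 ^ 2) + 4 * (B12 * H12) := by linear_combination ((1)) * r5
lemma p_h_4 : H12 * (H12 * T12) = (H12 ^ 2 * T12) := by ring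
lemma p_h_5 : H12 * (T12 ^ 2) = (H12 * T12 ^ 2) := by ring
lemma p_h_6 : H12 * (B12) = (B12 * H12) := by ring
lemma p_h_7 : H12 * (H12 ^ 2 * T12) = 4 * (B12 * H12 * T12) - 4 * (B12 * T12 ^ 2) := by linear_combination ((-1) * H12 * ah) * r1 + ((-1)) * r2 + (T12) * r5
lemma p_h_8 : H12 * (H12 * T12 ^ 2) = 4 * (B12 * T12 ^ 2) := by linear_combination ((1)) * r2
lemma p_h_9 : H12 * (B12 * H12) = (B12 * H12 * T12) - ah * (B12 * T12 ^ 2) := by linear_combination ((1)) * r3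
lemma p_h_10 : H12 * (B12 * T12) = (B12 * H12 * T12) := by ring
lemma p_h_11 : H12 * (B12 * H12 * T12) = (B12 * H12 * T12 ^ 2) := by linear_combination ((-1) * B12 * ah) * r1 + (T12) * r3
lemma p_h_12 : H12 * (B12 * T12 ^ 2) = (B12 * H12 * T12 ^ 2) := by ring
lemma p_h_13 : H12 * (B12 * H12 * T12 ^ 2) = (0 : R12) := by linear_combination ((-1) * T12 * B12 * ah + H12 * B12) * r1 + (T12^2) * r3
lemma p_t_0 : T12 * ((1 : R12)) = (T12) := by ring
lemma p_t_1 : T12 * (H12) = (H12 * T12) := by ring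
lemma p_t_2 : T12 * (T12) = (T12 ^ 2) := by ring
lemma p_t_3 : T12 * (H12 ^ 2) = (H12 ^ 2 * T12) := by ring
lemma p_t_4 : T12 * (H12 * T12) = (H12 * T12 ^ 2) := by ring
lemma p_t_5 : T12 * (T12 ^ 2) = (0 : R12) := by linear_combination ((1)) * r1
lemma p_t_6 : T12 * (B12) = (B12 * T12) := by ring
lemma p_t_7 : T12 * (H12 ^ 2 * T12) = 4 * (B12 * T12 ^ 2) := by linear_combination ((1)) * r2
lemma p_t_8 : T12 * (H12 * T12 ^ 2) = (0 : R12) := by linear_combination (H12) * r1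
lemma p_t_9 : T12 * (B12 * H12) = (B12 * H12 * T12) := by ring
lemma p_t_10 : T12 * (B12 * T12) = (B12 * T12 ^ 2) := by ring
lemma p_t_11 : T12 * (B12 * H12 * T12) = (B12 * H12 * T12 ^ 2) := by ring
lemma p_t_12 : T12 * (B12 * T12 ^ 2) = (0 : R12) := by linear_combination (B12) * r1
lemma p_t_13 : T12 * (B12 * H12 * T12 ^ 2) = (0 : R12) := by linear_combination (H12 * B12) * r1
lemma p_b_0 : B12 * ((1 : R12)) = (B12) := by ring
lemma p_b_1 : B12 * (H12) = (B12 * H12) := by ring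
lemma p_b_2 : B12 * (T12) = (B12 * T12) := by ring
lemma p_b_3 : B12 * (H12 ^ 2) = (B12 * H12 * T12) - ah * (B12 * T12 ^ 2) := by linear_combination ((1)) * r3
lemma p_b_4 : B12 * (H12 * T12) = (B12 * H12 * T12) := by ring
lemma p_b_5 : B12 * (T12 ^ 2) = (B12 * T12 ^ 2) := by ring
lemma p_b_6 : B12 * (B12) = (B12 * H12 * T12) - ah * (B12 * T12 ^ 2) := by linear_combination ((1)) * r3 + ((-1)) * r4
lemma p_b_7 : B12 * (H12 ^ 2 * T12) = (B12 * H12 * T12 ^ 2) := by linear_combination ((-1) * B12 * ah) * r1 + (T12) * r3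
lemma p_b_8 : B12 * (H12 * T12 ^ 2) = (B12 * H12 * T12 ^ 2) := by ring
lemma p_b_9 : B12 * (B12 * H12) = ah * (B12 * H12 * T12 ^ 2) := by linear_combination ((-1) * B12 * ah) * r1 + (T12 + H12) * r3 + ((-1) * H12) * r4 - (H12 * T12^2 * B12) * h2
lemma p_b_10 : B12 * (B12 * T12) = (B12 * H12 * T12 ^ 2) := by linear_combination ((-1) * B12 * ah) * r1 + (T12) * r3 + ((-1) * T12) * r4
lemma p_b_11 : B12 * (B12 * H12 * T12) = (0 : R12) := by linear_combination ((-1) * T12 * B12 * ah + H12 * B12 * ah) * r1 + (T12^2 + H12 * T12) * r3 + ((-1) * H12 * T12) * r4 - (H12 * T12^3 * B12) * h2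
lemma p_b_12 : B12 * (B12 * T12 ^ 2) = (0 : R12) := by linear_combination ((-1) * T12 * B12 * ah + H12 * B12) * r1 + (T12^2) * r3 + ((-1) * T12^2) * r4
lemma p_b_13 : B12 * (B12 * H12 * T12 ^ 2) = (0 : R12) := by linear_combination ((-1) * H12 * T12 * B12 * ah + H12^2 * B12) * r1 + (H12 * T12^2) * r3 + ((-1) * H12 * T12^2) * r4

lemma mulh_mem : ∀ x ∈ sp, H12 * x ∈ sp := by
  intro x hx
  induction hx using Submodule.span_induction with
  | mem y hy =>
      obtain ⟨i, rfl⟩ := hy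
      fin_cases i
      · show H12 * ((1 : R12)) ∈ sp
        rw [p_h_0]
        exact mem_1
      · show H12 * (H12) ∈ sp
        rw [p_h_1]
        exact mem_3
      · show H12 * (T12) ∈ sp
        rw [p_h_2]
        exact mem_4
      · show H12 * (H12 ^ 2) ∈ sp
        rw [p_h_3]
        exact Submodule.add_mem _ (Submodule.sub_mem _ (Submodule.neg_mem _ mem_7) (memah _ mem_8)) (mem4 _ mem_9)
      · show H12 * (H12 * T12) ∈ sp
        rw [p_h_4]
        exact mem_7
      · show H12 * (T12 ^ 2) ∈ sp
        rw [p_h_5]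
        exact mem_8
      · show H12 * (B12) ∈ sp
        rw [p_h_6]
        exact mem_9
      · show H12 * (H12 ^ 2 * T12) ∈ sp
        rw [p_h_7]
        exact Submodule.sub_mem _ (mem4 _ mem_11) (mem4 _ mem_12)
      · show H12 * (H12 * T12 ^ 2) ∈ sp
        rw [p_h_8]
        exact mem4 _ mem_12
      · show H12 * (B12 * H12) ∈ sp
        rw [p_h_9]
        exact Submodule.sub_mem _ (mem_11) (memah _ mem_12)
      · show H12 * (B12 * T12) ∈ sp
        rw [p_h_10]
        exact mem_11
      · show H12 * (B12 * H12 * T12) ∈ sp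
        rw [p_h_11]
        exact mem_13
      · show H12 * (B12 * T12 ^ 2) ∈ sp
        rw [p_h_12]
        exact mem_13
      · show H12 * (B12 * H12 * T12 ^ 2) ∈ sp
        rw [p_h_13]
        exact Submodule.zero_mem _
  | zero => rw [mul_zero]; exact Submodule.zero_mem _
  | add a b ha hb iha ihb => rw [mul_add]; exact Submodule.add_mem _ iha ihb
  | smul q a ha iha => rw [mul_smul_comm]; exact Submodule.smul_mem _ _ iha


lemma mult_mem : ∀ x ∈ sp, T12 * x ∈ sp := by
  intro x hx
  induction hx using Submodule.span_induction with
  | mem y hy =>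
      obtain ⟨i, rfl⟩ := hy
      fin_cases i
      · show T12 * ((1 : R12)) ∈ sp
        rw [p_t_0]
        exact mem_2
      · show T12 * (H12) ∈ sp
        rw [p_t_1]
        exact mem_4
      · show T12 * (T12) ∈ sp
        rw [p_t_2]
        exact mem_5
      · show T12 * (H12 ^ 2) ∈ sp
        rw [p_t_3]
        exact mem_7
      · show T12 * (H12 * T12) ∈ sp
        rw [p_t_4]
        exact mem_8
      · show T12 * (T12 ^ 2) ∈ sp
        rw [p_t_5]
        exact Submodule.zero_mem _
      · show T12 * (B12) ∈ sp
        rw [p_t_6]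
        exact mem_10
      · show T12 * (H12 ^ 2 * T12) ∈ sp
        rw [p_t_7]
        exact mem4 _ mem_12
      · show T12 * (H12 * T12 ^ 2) ∈ sp
        rw [p_t_8]
        exact Submodule.zero_mem _
      · show T12 * (B12 * H12) ∈ sp
        rw [p_t_9]
        exact mem_11
      · show T12 * (B12 * T12) ∈ sp
        rw [p_t_10]
        exact mem_12
      · show T12 * (B12 * H12 * T12) ∈ sp
        rw [p_t_11]
        exact mem_13
      · show T12 * (B12 * T12 ^ 2) ∈ sp
        rw [p_t_12]
        exact Submodule.zero_mem _
      · show T12 * (B12 * H12 * T12 ^ 2) ∈ sp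
        rw [p_t_13]
        exact Submodule.zero_mem _
  | zero => rw [mul_zero]; exact Submodule.zero_mem _
  | add a b ha hb iha ihb => rw [mul_add]; exact Submodule.add_mem _ iha ihb
  | smul q a ha iha => rw [mul_smul_comm]; exact Submodule.smul_mem _ _ iha


lemma mulb_mem : ∀ x ∈ sp, B12 * x ∈ sp := by
  intro x hx
  induction hx using Submodule.span_induction with
  | mem y hy =>
      obtain ⟨i, rfl⟩ := hy
      fin_cases i
      · show B12 * ((1 : R12)) ∈ sp
        rw [p_b_0]
        exact mem_6
      · show B12 * (H12) ∈ sp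
        rw [p_b_1]
        exact mem_9
      · show B12 * (T12) ∈ sp
        rw [p_b_2]
        exact mem_10
      · show B12 * (H12 ^ 2) ∈ sp
        rw [p_b_3]
        exact Submodule.sub_mem _ (mem_11) (memah _ mem_12)
      · show B12 * (H12 * T12) ∈ sp
        rw [p_b_4]
        exact mem_11
      · show B12 * (T12 ^ 2) ∈ sp
        rw [p_b_5]
        exact mem_12
      · show B12 * (B12) ∈ sp
        rw [p_b_6]
        exact Submodule.sub_mem _ (mem_11) (memah _ mem_12)
      · show B12 * (H12 ^ 2 * T12) ∈ sp
        rw [p_b_7]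
        exact mem_13
      · show B12 * (H12 * T12 ^ 2) ∈ sp
        rw [p_b_8]
        exact mem_13
      · show B12 * (B12 * H12) ∈ sp
        rw [p_b_9]
        exact memah _ mem_13
      · show B12 * (B12 * T12) ∈ sp
        rw [p_b_10]
        exact mem_13
      · show B12 * (B12 * H12 * T12) ∈ sp
        rw [p_b_11]
        exact Submodule.zero_mem _
      · show B12 * (B12 * T12 ^ 2) ∈ sp
        rw [p_b_12]
        exact Submodule.zero_mem _
      · show B12 * (B12 * H12 * T12 ^ 2) ∈ sp
        rw [p_b_13]
        exact Submodule.zero_mem _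
  | zero => rw [mul_zero]; exact Submodule.zero_mem _
  | add a b ha hb iha ihb => rw [mul_add]; exact Submodule.add_mem _ iha ihb
  | smul q a ha iha => rw [mul_smul_comm]; exact Submodule.smul_mem _ _ iha


lemma span_top12 : sp = ⊤ := by
  rw [eq_top_iff]
  rintro x -
  obtain ⟨p, rfl⟩ := Ideal.Quotient.mk_surjective x
  induction p using MvPolynomial.induction_on with
  | C a =>
      have hca : Ideal.Quotient.mk I12 (C a) = a • (1 : R12) := by
        have h1 : Ideal.Quotient.mk I12 (C a) = algebraMap ℚ R12 a := rfl
        rw [h1, Algebra.algebraMap_eq_smul_one]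
      rw [hca]
      exact Submodule.smul_mem _ _ mem_0
  | add p q hp hq => rw [map_add]; exact Submodule.add_mem _ hp hq
  | mul_X p n hp =>
      rw [map_mul]
      fin_cases n
      · rw [mul_comm]; exact mulh_mem _ hp
      · rw [mul_comm]; exact mult_mem _ hp
      · rw [mul_comm]; exact mulb_mem _ hp


theorem chow_ring_odd_degree :
    Module.finrank ℚ R12 = 14 ∧
    ∃ b : Module.Basis (Fin 14) ℚ R12,
      ∀ i : Fin 14,
        b i = ![1, H12, T12, H12 ^ 2, H12 * T12, T12 ^ 2, B12,
                H12 ^ 2 * T12, H12 * T12 ^ 2, B12 * H12, B12 * T12,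
                B12 * H12 * T12, B12 * T12 ^ 2, B12 * H12 * T12 ^ 2] i := by
  have hsp : ⊤ ≤ Submodule.span ℚ (Set.range vv) := by
    rw [show Submodule.span ℚ (Set.range vv) = sp from rfl, span_top12]
  refine ⟨?_, Module.Basis.mk hli12 hsp, fun i => by rw [Module.Basis.mk_apply]; rfl⟩
  rw [Module.finrank_eq_card_basis (Module.Basis.mk hli12 hsp), Fintype.card_fin]


end
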